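/- Let G(A;q) := Σ_{n≥0} q^{n²+2n} (A;q²)_n / (q²;q²)_n. Then G(A;q) = (1/(2√A)) · (-q;q²)_∞ · [(-√A; -q)_∞ − (√A; -q)_∞]. -/

import Mathlib

open Finset PowerSeries
open scoped Classical

noncomputable section

/-- Product topology on formal power series, coefficients discrete: the usual topology of
formal power series, in which infinite sums/products of series of increasing order converge. -/
instance psTop (R : Type*) : TopologicalSpace (PowerSeries R) :=
  @Pi.topologicalSpace (Unit →₀ ℕ) (fun _ => R) (fun _ => ⊥)

/-- `rowLen p i` is the `(i+1)`-st largest part of `p` (0 if none), i.e. `λ_{i+1}`. -/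
def rowLen {n : ℕ} (p : n.Partition) (i : ℕ) : ℕ :=
  ((p.parts.sort (· ≤ ·)).reverse).getD i 0

/-- `colLen p j` is the length of the `(j+1)`-st column of the Young diagram, i.e. `λ'_{j+1}`. -/
def colLen {n : ℕ} (p : n.Partition) (j : ℕ) : ℕ :=
  (p.parts.filter (fun a => j < a)).card

/-- A partition is self-conjugate iff every row equals the corresponding column. -/
def SelfConj {n : ℕ} (p : n.Partition) : Prop := ∀ i, rowLen p i = colLen p i

/-- `hookCount p t` = number of cells of the Young diagram of `p` with hook length exactly `t`;
the hook length of the (0-indexed) cell `(i,j)` is `(λ_i - j) + (λ'_j - i) - 1`. -/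
def hookCount {n : ℕ} (p : n.Partition) (t : ℕ) : ℕ :=
  ((range n ×ˢ range n).filter (fun c =>
    c.2 < rowLen p c.1 ∧ (rowLen p c.1 - c.2) + (colLen p c.2 - c.1) - 1 = t)).card

/-- Infinite Pochhammer-type product `(a; b)_∞ = ∏_{j ≥ 0} (1 - a b^j)`. -/
def poch {R : Type*} [CommRing R] (a b : PowerSeries R) : PowerSeries R :=
  ∏' j : ℕ, (1 - a * b ^ j)

/-- Finite Pochhammer symbol `(a; b)_m = ∏_{j=0}^{m-1} (1 - a b^j)`. -/
def pochN {R : Type*} [CommRing R] (a b : PowerSeries R) (m : ℕ) : PowerSeries R :=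
  ∏ j ∈ range m, (1 - a * b ^ j)

/-- Total number of hooks of length `t` among self-conjugate partitions of `n`. -/
def astar (t n : ℕ) : ℕ :=
  ∑ p : n.Partition, if SelfConj p then hookCount p t else 0

/-- Number of self-conjugate partitions of `n`. -/
def sc (n : ℕ) : ℕ := (univ.filter fun p : n.Partition => SelfConj p).card

/-- Number of partitions of `n` into distinct odd parts. -/
def qstar (n : ℕ) : ℕ :=
  (univ.filter fun p : n.Partition => p.parts.Nodup ∧ ∀ a ∈ p.parts, Odd a).card


open Filter
open scoped Topology

instance psT2 (R : Type*) : T2Space (PowerSeries R) := by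
  letI : TopologicalSpace R := ⊥
  haveI : DiscreteTopology R := ⟨rfl⟩
  exact @Pi.t2Space (Unit →₀ ℕ) (fun _ => R) _ (fun _ => inferInstance)

variable {R : Type*} [CommRing R]

lemma coeff_apply' (f : PowerSeries R) (d : ℕ) :
    PowerSeries.coeff d f = f (Finsupp.single () d) := rfl

def stabLimit (F : Finset ℕ → PowerSeries R) : PowerSeries R :=
  fun σ => PowerSeries.coeff (σ ()) (F (range (σ () + 1)))

lemma coeff_stabLimit (F : Finset ℕ → PowerSeries R) (d : ℕ) :
    PowerSeries.coeff d (stabLimit F) = PowerSeries.coeff d (F (range (d+1))) := by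
  rw [coeff_apply']
  show PowerSeries.coeff ((Finsupp.single () d) ()) (F (range ((Finsupp.single () d) () + 1)))
    = _
  simp

lemma hasLim_of_stable (F : Finset ℕ → PowerSeries R)
    (key : ∀ (e : ℕ) (s : Finset ℕ), range (e+1) ⊆ s →
      PowerSeries.coeff e (F s) = PowerSeries.coeff e (F (range (e+1)))) :
    Tendsto F atTop (𝓝 (stabLimit F)) := by
  letI : TopologicalSpace R := ⊥
  haveI : DiscreteTopology R := ⟨rfl⟩
  refine (@tendsto_pi_nhds (Finset ℕ) (Unit →₀ ℕ) (fun _ => R) (fun _ => ⊥) F _ atTop).2 ?_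
  intro σ
  rw [nhds_discrete R, tendsto_pure]
  filter_upwards [Filter.eventually_atTop.2 ⟨range (σ () + 1), fun s hs => key (σ ()) s hs⟩]
    with s hs
  have hσ : σ = Finsupp.single () (σ ()) := Finsupp.unique_single σ
  calc F s σ = PowerSeries.coeff (σ ()) (F s) := by rw [coeff_apply', ← hσ]
    _ = PowerSeries.coeff (σ ()) (F (range (σ () + 1))) := hs
    _ = stabLimit F σ := rfl

lemma coeff_eq_of_dvd {a b : PowerSeries R} {d e : ℕ} (h : (X : PowerSeries R)^(d+1) ∣ a - b)
    (hed : e ≤ d) : PowerSeries.coeff e a = PowerSeries.coeff e b := by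
  have := (PowerSeries.X_pow_dvd_iff.1 h) e (by omega)
  rw [map_sub, sub_eq_zero] at this
  exact this

lemma dvd_prod_sub_one {s : Finset ℕ} {g : ℕ → PowerSeries R} {c : PowerSeries R}
    (h : ∀ j ∈ s, c ∣ (g j - 1)) : c ∣ (∏ j ∈ s, g j) - 1 := by
  induction s using Finset.cons_induction with
  | empty => simp
  | cons a s ha ih =>
    rw [Finset.prod_cons]
    have h1 : c ∣ g a - 1 := h a (Finset.mem_cons_self a s)
    have h2 : c ∣ (∏ j ∈ s, g j) - 1 := ih fun j hj => h j (Finset.mem_cons_of_mem hj)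
    have : g a * ∏ j ∈ s, g j - 1
        = (g a - 1) * ∏ j ∈ s, g j + ((∏ j ∈ s, g j) - 1) := by ring
    rw [this]
    exact dvd_add (h1.mul_right _) h2

lemma coeff_tsum_trunc (f : ℕ → PowerSeries R)
    (h : ∀ d n, d < n → PowerSeries.coeff d (f n) = 0) (d : ℕ) :
    PowerSeries.coeff d (∑' n, f n) = PowerSeries.coeff d (∑ n ∈ range (d+1), f n) := by
  have key : ∀ (e : ℕ) (s : Finset ℕ), range (e+1) ⊆ s →
      PowerSeries.coeff e (∑ n ∈ s, f n) = PowerSeries.coeff e (∑ n ∈ range (e+1), f n) := by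
    intro e s hs
    rw [map_sum, map_sum]
    exact (Finset.sum_subset hs fun x _ hnx => h e x (by simpa using hnx)).symm
  have hsum : HasSum f (stabLimit fun s => ∑ n ∈ s, f n) := hasLim_of_stable _ key
  rw [hsum.tsum_eq, coeff_stabLimit]

lemma coeff_prod_stable (f : ℕ → PowerSeries R)
    (h : ∀ d n, d < n → (X : PowerSeries R)^(d+1) ∣ (f n - 1)) :
    ∀ (e : ℕ) (s : Finset ℕ), range (e+1) ⊆ s →
      PowerSeries.coeff e (∏ n ∈ s, f n) = PowerSeries.coeff e (∏ n ∈ range (e+1), f n) := by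
  intro e s hs
  have hd : (X : PowerSeries R)^(e+1) ∣ (∏ j ∈ s \ range (e+1), f j) - 1 :=
    dvd_prod_sub_one fun j hj => h e j (by simpa using (Finset.mem_sdiff.1 hj).2)
  have hsplit : ∏ n ∈ s, f n = (∏ j ∈ s \ range (e+1), f j) * ∏ n ∈ range (e+1), f n :=
    (Finset.prod_sdiff hs).symm
  refine coeff_eq_of_dvd ?_ le_rfl
  rw [hsplit]
  have : (∏ j ∈ s \ range (e+1), f j) * (∏ n ∈ range (e+1), f n) - ∏ n ∈ range (e+1), f n
      = ((∏ j ∈ s \ range (e+1), f j) - 1) * ∏ n ∈ range (e+1), f n := by ring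
  rw [this]
  exact hd.mul_right _

lemma coeff_tprod_trunc (f : ℕ → PowerSeries R)
    (h : ∀ d n, d < n → (X : PowerSeries R)^(d+1) ∣ (f n - 1)) (d : ℕ) :
    PowerSeries.coeff d (∏' n, f n) = PowerSeries.coeff d (∏ n ∈ range (d+1), f n) := by
  have hp : HasProd f (stabLimit fun s => ∏ n ∈ s, f n) :=
    hasLim_of_stable _ (coeff_prod_stable f h)
  rw [hp.tprod_eq, coeff_stabLimit]

lemma tprod_trunc_dvd (f : ℕ → PowerSeries R)
    (h : ∀ d n, d < n → (X : PowerSeries R)^(d+1) ∣ (f n - 1)) (d : ℕ) :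
    (X : PowerSeries R)^(d+1) ∣ (∏' n, f n) - ∏ n ∈ range (d+1), f n := by
  rw [PowerSeries.X_pow_dvd_iff]
  intro e he
  rw [map_sub, sub_eq_zero]
  calc PowerSeries.coeff e (∏' n, f n)
      = PowerSeries.coeff e (∏ n ∈ range (e+1), f n) := coeff_tprod_trunc f h e
    _ = PowerSeries.coeff e (∏ n ∈ range (d+1), f n) :=
        (coeff_prod_stable f h e (range (d+1)) (Finset.range_subset_range.2 (by omega))).symm


namespace GBaux
variable {R : Type*} [CommRing R]

/-- Gaussian binomial coefficient `[M choose n]_t`, defined by the Pascal recursion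
`[M+1, n+1] = t^(n+1) [M, n+1] + [M, n]`. -/
def gb (t : R) : ℕ → ℕ → R
  | 0, 0 => 1
  | 0, _+1 => 0
  | _+1, 0 => 1
  | M+1, n+1 => t^(n+1) * gb t M (n+1) + gb t M n

@[simp] lemma gb_zero_right (t : R) (M : ℕ) : gb t M 0 = 1 := by cases M <;> rfl

lemma gb_eq_zero (t : R) : ∀ M n, M < n → gb t M n = 0 := by
  intro M
  induction M with
  | zero => intro n hn; match n, hn with | (k+1), _ => rfl
  | succ M ih =>
    intro n hn
    match n, hn with
    | (n+1), hn =>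
      show t^(n+1) * gb t M (n+1) + gb t M n = 0
      rw [ih (n+1) (by omega), ih n (by omega)]
      ring

@[simp] lemma gb_self (t : R) : ∀ M, gb t M M = 1 := by
  intro M
  induction M with
  | zero => rfl
  | succ M ih =>
    show t^(M+1) * gb t M (M+1) + gb t M M = 1
    rw [gb_eq_zero t M (M+1) (by omega), ih]
    ring

/-- Gauss's q-binomial theorem (finite product form). -/
lemma gauss (t : R) : ∀ (M : ℕ) (z : R),
    ∏ j ∈ range M, (1 + z * t^j) = ∑ n ∈ range (M+1), t^(n.choose 2) * gb t M n * z^n := by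
  intro M
  induction M with
  | zero => intro z; simp
  | succ M ih =>
    intro z
    have step : ∏ j ∈ range (M+1), (1 + z * t^j)
        = (1 + z) * ∏ j ∈ range M, (1 + (z*t) * t^j) := by
      rw [Finset.prod_range_succ']
      have hc : ∏ j ∈ range M, (1 + z * t^(j+1)) = ∏ j ∈ range M, (1 + (z*t) * t^j) :=
        Finset.prod_congr rfl fun j _ => by ring
      rw [hc]
      simp only [pow_zero, mul_one]
      ring
    rw [step, ih (z*t)]
    -- RHS: expand
    have choose_succ : ∀ n : ℕ, (n+1).choose 2 = n.choose 2 + n := by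
      intro n
      rw [Nat.choose_succ_succ]
      simp [Nat.choose_one_right, Nat.add_comm]
    -- LHS = ∑ t^(Cn2) gb M n (z t)^n + z * ∑ ...
    rw [add_mul, one_mul]
    -- now: ∑_{n<M+1} t^{Cn2} gb M n (zt)^n + z * (same) = ∑_{n<M+2} t^{Cn2} gb (M+1) n z^n
    have e1 : ∑ n ∈ range (M+1), t^(n.choose 2) * gb t M n * (z*t)^n
        = ∑ n ∈ range (M+1), t^(n.choose 2 + n) * gb t M n * z^n := by
      refine Finset.sum_congr rfl fun n _ => ?_
      rw [mul_pow, pow_add]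
      ring
    have e2 : z * ∑ n ∈ range (M+1), t^(n.choose 2) * gb t M n * (z*t)^n
        = ∑ n ∈ range (M+1), t^(n.choose 2 + n) * gb t M n * z^(n+1) := by
      rw [Finset.mul_sum]
      refine Finset.sum_congr rfl fun n _ => ?_
      rw [mul_pow, pow_add, pow_succ]
      ring
    rw [e2, e1]
    -- target sum: split off n=0, rewrite gb (M+1) (n+1)
    have target : ∑ n ∈ range (M+2), t^(n.choose 2) * gb t (M+1) n * z^n
        = 1 + ∑ n ∈ range (M+1),
            t^((n+1).choose 2) * (t^(n+1) * gb t M (n+1) + gb t M n) * z^(n+1) := by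
      have gbrec : ∀ n : ℕ, gb t (M+1) (n+1) = t^(n+1) * gb t M (n+1) + gb t M n :=
        fun n => rfl
      rw [Finset.sum_range_succ' (fun n => t^(n.choose 2) * gb t (M+1) n * z^n) (M+1)]
      simp only [Nat.choose, pow_zero, gb_zero_right, mul_one, one_mul]
      rw [add_comm]
      norm_num
      exact Finset.sum_congr rfl fun x _ => by rw [gbrec]
    rw [target]
    -- first sum: split off n=0 as 1, shift
    have e3 : ∑ n ∈ range (M+1), t^(n.choose 2 + n) * gb t M n * z^n
        = 1 + ∑ n ∈ range M, t^((n+1).choose 2 + (n+1)) * gb t M (n+1) * z^(n+1) := by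
      rw [Finset.sum_range_succ' (fun n => t^(n.choose 2 + n) * gb t M n * z^n) M]
      simp only [Nat.choose, pow_zero, gb_zero_right, mul_one, one_mul]
      rw [add_comm]
      norm_num
    have e4 : ∑ n ∈ range M, t^((n+1).choose 2 + (n+1)) * gb t M (n+1) * z^(n+1)
        = ∑ n ∈ range (M+1), t^((n+1).choose 2 + (n+1)) * gb t M (n+1) * z^(n+1) := by
      rw [Finset.sum_range_succ, gb_eq_zero t M (M+1) (by omega)]
      ring
    rw [e3, e4, add_assoc, ← Finset.sum_add_distrib]
    congr 1
    refine Finset.sum_congr rfl fun n _ => ?_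
    rw [choose_succ n, pow_add, pow_add]
    ring

/-- `pp t m = ∏_{j=1}^m (1 - t^j)`. -/
def pp (t : R) (m : ℕ) : R := ∏ j ∈ range m, (1 - t^(j+1))

@[simp] lemma pp_zero (t : R) : pp t 0 = 1 := by simp [pp]

lemma pp_succ (t : R) (m : ℕ) : pp t (m+1) = pp t m * (1 - t^(m+1)) := by
  rw [pp, Finset.prod_range_succ]; rfl

lemma gbrel (t : R) : ∀ M n, n ≤ M → gb t M n * (pp t n * pp t (M-n)) = pp t M := by
  intro M
  induction M with
  | zero => intro n hn; interval_cases n; simp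
  | succ M ih =>
    intro n hn
    match n with
    | 0 => simp
    | (n+1) =>
      show (t^(n+1) * gb t M (n+1) + gb t M n) * (pp t (n+1) * pp t (M+1-(n+1))) = pp t (M+1)
      have hnM : n ≤ M := by omega
      rcases Nat.lt_or_ge n M with hlt | hge
      · -- n+1 ≤ M
        have h1 : M + 1 - (n+1) = (M - (n+1)) + 1 := by omega
        have h2 : pp t (M+1-(n+1)) = pp t (M-(n+1)) * (1 - t^(M-n)) := by
          rw [h1, pp_succ, show M - (n+1) + 1 = M - n from by omega]
        have h3 : pp t (n+1) = pp t n * (1 - t^(n+1)) := pp_succ t n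
        have key1 := ih (n+1) (by omega)
        have key2 := ih n hnM
        have hMn : M - n = (M - (n+1)) + 1 := by omega
        have hexp : t^(n+1) * t^(M-n) = t^(M+1) := by
          rw [← pow_add]
          congr 1
          omega
        calc (t^(n+1) * gb t M (n+1) + gb t M n) * (pp t (n+1) * pp t (M+1-(n+1)))
            = t^(n+1) * (1 - t^(M-n)) * (gb t M (n+1) * (pp t (n+1) * pp t (M-(n+1))))
              + (1 - t^(n+1)) * (gb t M n * (pp t n * (pp t (M-(n+1)) * (1 - t^(M-n))))) := by
              rw [h2, h3]; ring
          _ = t^(n+1) * (1 - t^(M-n)) * pp t M + (1 - t^(n+1)) * pp t M := by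
              rw [key1]
              have : pp t (M - (n+1)) * (1 - t^(M-n)) = pp t (M - n) := by
                rw [hMn, pp_succ, show M - (n+1) + 1 = M - n from by omega]
              rw [this, key2]
          _ = (1 - t^(M+1)) * pp t M := by
              rw [← hexp]; ring
          _ = pp t (M+1) := by rw [pp_succ]; ring
      · -- n = M
        have hnM' : n = M := by omega
        subst hnM'
        rw [gb_eq_zero t n (n+1) (by omega), Nat.sub_self]
        simp

end GBaux


namespace Saux
open GBaux

lemma pp_add {R : Type*} [CommRing R] (t : R) (u v : ℕ) :
    GBaux.pp t (u+v) = GBaux.pp t u * ∏ j ∈ range v, (1 - t^(u+j+1)) := by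
  rw [GBaux.pp, GBaux.pp, Finset.prod_range_add]
variable {F : Type*} [Field F]

lemma two_choose_two : ∀ m : ℕ, 2 * Nat.choose m 2 + m = m * m := by
  intro m
  induction m with
  | zero => rfl
  | succ m ih =>
    have h : Nat.choose (m+1) 2 = Nat.choose m 1 + Nat.choose m 2 := rfl
    rw [h, Nat.choose_one_right]
    have e : (m+1) * (m+1) = m * m + 2*m + 1 := by ring
    rw [e]
    omega

lemma choose_odd (m : ℕ) : Nat.choose (2*m+1) 2 = 2*(m*m) + m := by
  have h := two_choose_two (2*m+1)
  have e : (2*m+1) * (2*m+1) = 4*(m*m) + 4*m + 1 := by ring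
  rw [e] at h
  omega

lemma sum_range_pair {M : Type*} [AddCommMonoid M] (g : ℕ → M) :
    ∀ a : ℕ, ∑ n ∈ range (2*a), g n = ∑ m ∈ range a, (g (2*m) + g (2*m+1)) := by
  intro a
  induction a with
  | zero => simp
  | succ a ih =>
    have h2 : 2*(a+1) = (2*a) + 1 + 1 := by ring
    rw [h2, Finset.sum_range_succ, Finset.sum_range_succ, ih, Finset.sum_range_succ,
      add_assoc]

lemma sum_tri {M : Type*} [AddCommMonoid M] (g : ℕ → ℕ → M) :
    ∀ K : ℕ, ∑ n ∈ range K, ∑ m ∈ range (n+1), g m (n-m)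
      = ∑ m ∈ range K, ∑ k ∈ range (K-m), g m k := by
  intro K
  induction K with
  | zero => simp
  | succ K ih =>
    rw [Finset.sum_range_succ, ih, Finset.sum_range_succ (fun m => ∑ k ∈ range (K+1-m), g m k)]
    have e0 : K + 1 - K = 1 := by omega
    rw [e0]
    have e1 : ∀ m ∈ range K, ∑ k ∈ range (K+1-m), g m k
        = (∑ k ∈ range (K-m), g m k) + g m (K-m) := by
      intro m hm
      have : K + 1 - m = (K - m) + 1 := by
        have := Finset.mem_range.1 hm; omega
      rw [this, Finset.sum_range_succ]
    rw [Finset.sum_congr rfl e1, Finset.sum_add_distrib]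
    rw [Finset.sum_range_succ (fun m => g m (K-m)), Nat.sub_self]
    simp [add_assoc]

-- unit helpers
lemma ne_zero_of_cc_one {φ : F⟦X⟧} (h : constantCoeff φ = 1) : φ ≠ 0 := by
  intro h0
  rw [h0, map_zero] at h
  exact one_ne_zero h.symm

lemma mul_inv_one {φ : F⟦X⟧} (h : constantCoeff φ = 1) : φ * φ⁻¹ = 1 :=
  PowerSeries.mul_inv_cancel _ (by rw [h]; exact one_ne_zero)

lemma eq_mul_inv {x t a : F⟦X⟧} (ha : constantCoeff a = 1) (h : x * a = t) :
    x = t * a⁻¹ := by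
  rw [← h, mul_assoc, mul_inv_one ha, mul_one]

lemma cancel_right {x t a : F⟦X⟧} (ha : constantCoeff a = 1) (h : x * a = t * a) :
    x = t := mul_right_cancel₀ (ne_zero_of_cc_one ha) h

/-- from `x * (a * b) = c` with units, get `x * c⁻¹ = a⁻¹ * b⁻¹`. -/
lemma inv_helper {x a b c : F⟦X⟧} (ha : constantCoeff a = 1) (hb : constantCoeff b = 1)
    (hc : constantCoeff c = 1) (h : x * (a * b) = c) :
    x * c⁻¹ = a⁻¹ * b⁻¹ := by
  have h1 : x = c * (a⁻¹ * b⁻¹) := by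
    have : x * (a * b) * (a⁻¹ * b⁻¹) = c * (a⁻¹ * b⁻¹) := by rw [h]
    calc x = x * ((a * a⁻¹) * (b * b⁻¹)) := by rw [mul_inv_one ha, mul_inv_one hb]; ring
      _ = x * (a * b) * (a⁻¹ * b⁻¹) := by ring
      _ = c * (a⁻¹ * b⁻¹) := this
  rw [h1]
  calc c * (a⁻¹ * b⁻¹) * c⁻¹ = c * c⁻¹ * (a⁻¹ * b⁻¹) := by ring
    _ = a⁻¹ * b⁻¹ := by rw [mul_inv_one hc, one_mul]

-- constant coefficients
lemma cc_prod_one_sub (s : Finset ℕ) (g : ℕ → F⟦X⟧) (h : ∀ j ∈ s, constantCoeff (g j) = 0) :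
    constantCoeff (∏ j ∈ s, (1 - g j)) = 1 := by
  rw [map_prod]
  have h1 : ∀ j ∈ s, constantCoeff (1 - g j) = 1 := fun j hj => by
    rw [map_sub, map_one, h j hj, sub_zero]
  rw [Finset.prod_congr rfl h1]
  simp

lemma cc_pochN (a b : F⟦X⟧) (ha : constantCoeff a = 0) (n : ℕ) :
    constantCoeff (pochN a b n) = 1 :=
  cc_prod_one_sub _ _ fun j _ => by rw [map_mul, ha, zero_mul]

lemma cc_pp2 (n : ℕ) : constantCoeff (pp ((X:F⟦X⟧)^2) n) = 1 :=
  cc_prod_one_sub _ _ fun j _ => by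
    rw [map_pow, map_pow, constantCoeff_X]
    simp

lemma cc_ppX (n : ℕ) : constantCoeff (pp (-(X:F⟦X⟧)) n) = 1 :=
  cc_prod_one_sub _ _ fun j _ => by
    rw [map_pow, map_neg, constantCoeff_X, neg_zero, zero_pow (by omega : j+1 ≠ 0)]

lemma cc_X2 : constantCoeff ((X:F⟦X⟧)^2) = 0 := by
  rw [map_pow, constantCoeff_X]; simp

lemma cc_negX : constantCoeff (-(X:F⟦X⟧)) = 0 := by
  rw [map_neg, constantCoeff_X, neg_zero]

lemma cc_negXpow (e : ℕ) (he : e ≠ 0) : constantCoeff (-((X:F⟦X⟧)^e)) = 0 := by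
  rw [map_neg, map_pow, constantCoeff_X, zero_pow he, neg_zero]

-- pochN reindex lemmas
lemma pochN_gauss (a b : F⟦X⟧) (M : ℕ) :
    pochN a b M = ∑ n ∈ range (M+1), b^(n.choose 2) * gb b M n * (-a)^n := by
  rw [pochN]
  have h1 : ∀ j ∈ range M, (1 : F⟦X⟧) - a * b^j = 1 + (-a) * b^j := fun j _ => by ring
  rw [Finset.prod_congr rfl h1]
  exact gauss b M (-a)

lemma pochN_eq_pp2 (n : ℕ) : pochN ((X:F⟦X⟧)^2) (X^2) n = pp ((X:F⟦X⟧)^2) n := by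
  rw [pochN, pp]
  refine Finset.prod_congr rfl fun j _ => ?_
  rw [pow_succ' ((X:F⟦X⟧)^2) j]

lemma pochN_add (a b : F⟦X⟧) (u v : ℕ) :
    pochN a b (u+v) = pochN a b u * ∏ j ∈ range v, (1 - a * b^(u+j)) := by
  rw [pochN, pochN, Finset.prod_range_add]

/-- splitting the odd-part product: tail is a `pochN` in `X^(2u+1)`. -/
lemma Podd_add (u v : ℕ) :
    pochN (-(X:F⟦X⟧)) (X^2) (u+v)
      = pochN (-(X:F⟦X⟧)) (X^2) u * pochN (-((X:F⟦X⟧)^(2*u+1))) (X^2) v := by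
  rw [pochN_add, pochN]
  congr 1
  refine Finset.prod_congr rfl fun j _ => ?_
  have h1 : (-(X:F⟦X⟧)) * (X^2)^(u+j) = (-(X^(2*u+1))) * (X^2)^j := by
    rw [neg_mul, neg_mul, ← pow_mul, ← pow_mul, ← pow_succ', ← pow_add]
    congr 2
    omega
  rw [h1]

/-- the odd pochhammer factorization `(pp (-X)) (2m+1) = (-q;q²)_{m+1} (q²;q²)_m`. -/
lemma pp_odd : ∀ m : ℕ, pp (-(X:F⟦X⟧)) (2*m+1)
    = pochN (-(X:F⟦X⟧)) (X^2) (m+1) * pochN ((X:F⟦X⟧)^2) (X^2) m := by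
  intro m
  induction m with
  | zero =>
    rw [pp, pochN, pochN]
    simp
  | succ m ih =>
    have h2 : 2*(m+1)+1 = (2*m+1) + 2 := by ring
    rw [h2, pp_add]
    have hprod : ∏ j ∈ range 2, (1 - (-(X:F⟦X⟧))^(2*m+1+j+1))
        = (1 - (-(X:F⟦X⟧))^(2*m+2)) * (1 - (-(X:F⟦X⟧))^(2*m+3)) := by
      rw [Finset.prod_range_succ, Finset.prod_range_one]
    rw [hprod, ih]
    have e1 : pochN (-(X:F⟦X⟧)) (X^2) (m+1+1)
        = pochN (-(X:F⟦X⟧)) (X^2) (m+1) * (1 - (-(X:F⟦X⟧)) * (X^2)^(m+1)) := by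
      rw [pochN, pochN, Finset.prod_range_succ]
    have e2 : pochN ((X:F⟦X⟧)^2) (X^2) (m+1)
        = pochN ((X:F⟦X⟧)^2) (X^2) m * (1 - (X:F⟦X⟧)^2 * (X^2)^m) := by
      rw [pochN, pochN, Finset.prod_range_succ]
    rw [e1, e2]
    have p1 : (-(X:F⟦X⟧))^(2*m+2) = (X:F⟦X⟧)^2 * (X^2)^m := by
      rw [Even.neg_pow ⟨m+1, by ring⟩, ← pow_mul, ← pow_add]
      congr 1
      omega
    have p2 : (-(X:F⟦X⟧))^(2*m+3) = (-(X:F⟦X⟧)) * (X^2)^(m+1) := by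
      rw [Odd.neg_pow ⟨m+1, by ring⟩, neg_mul, ← pow_mul, ← pow_succ', neg_inj,
        show 2*(m+1) = 2*m+2 from by omega]
    rw [p1, p2]
    ring


-- abbreviations
local notation "Qs" => fun n => pochN ((X:F⟦X⟧)^2) ((X:F⟦X⟧)^2) n
local notation "Podd" => fun n => pochN (-(X:F⟦X⟧)) ((X:F⟦X⟧)^2) n

lemma cc_Qs (n : ℕ) : constantCoeff (pochN ((X:F⟦X⟧)^2) (X^2) n) = 1 :=
  cc_pochN _ _ cc_X2 n

lemma cc_Podd (n : ℕ) : constantCoeff (pochN (-(X:F⟦X⟧)) (X^2) n) = 1 :=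
  cc_pochN _ _ cc_negX n

lemma m_le_mul_self (m : ℕ) : m ≤ m * m := by
  cases m with
  | zero => simp
  | succ m => exact Nat.le_mul_of_pos_left _ (Nat.succ_pos m)

lemma negX_pow (e : ℕ) : (-(X:F⟦X⟧))^e = (-1:F⟦X⟧)^e * X^e := by
  rw [neg_pow]

lemma dvd_negX_pow (a e : ℕ) (h : a ≤ e) : (X:F⟦X⟧)^a ∣ (-(X:F⟦X⟧))^e := by
  rw [negX_pow]
  exact (pow_dvd_pow X h).mul_left _

/-- `gb (X²) v k = tail3 * (Qs k)⁻¹` exactly. -/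
lemma gb_X2_eq (v k : ℕ) (hk : k ≤ v) :
    gb ((X:F⟦X⟧)^2) v k
      = (∏ j ∈ range k, (1 - (X:F⟦X⟧)^2 * ((X:F⟦X⟧)^2)^((v-k)+j)))
        * (pochN ((X:F⟦X⟧)^2) (X^2) k)⁻¹ := by
  have hrel := gbrel ((X:F⟦X⟧)^2) v k hk
  rw [← pochN_eq_pp2, ← pochN_eq_pp2, ← pochN_eq_pp2] at hrel
  -- Qs v = Qs (v-k) * tail3
  have hsplit : pochN ((X:F⟦X⟧)^2) (X^2) v
      = pochN ((X:F⟦X⟧)^2) (X^2) (v-k) * ∏ j ∈ range k, (1 - (X:F⟦X⟧)^2 * ((X:F⟦X⟧)^2)^((v-k)+j)) := by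
    rw [show v = (v-k) + k from by omega] 
    rw [pochN_add]
    rw [show v - k + k - k = v - k from by omega]
  rw [hsplit] at hrel
  apply eq_mul_inv (cc_Qs k)
  apply cancel_right (cc_Qs (v-k))
  calc gb ((X:F⟦X⟧)^2) v k * pochN ((X:F⟦X⟧)^2) (X^2) k * pochN ((X:F⟦X⟧)^2) (X^2) (v-k)
      = gb ((X:F⟦X⟧)^2) v k * (pochN ((X:F⟦X⟧)^2) (X^2) k * pochN ((X:F⟦X⟧)^2) (X^2) (v-k)) := by
        ring
    _ = pochN ((X:F⟦X⟧)^2) (X^2) (v-k) * ∏ j ∈ range k, (1 - (X:F⟦X⟧)^2 * ((X:F⟦X⟧)^2)^((v-k)+j)) := hrel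
    _ = (∏ j ∈ range k, (1 - (X:F⟦X⟧)^2 * ((X:F⟦X⟧)^2)^((v-k)+j))) * pochN ((X:F⟦X⟧)^2) (X^2) (v-k) := by
        ring

/-- the per-`m` congruence at the heart of the identity. -/
lemma per_m (K m u : ℕ) (hu : K = 2*m+1+u) :
    (X:F⟦X⟧)^K ∣ X^(2*(m*m)+m) *
      ((pochN (-(X:F⟦X⟧)) (X^2) K * gb (-(X:F⟦X⟧)) K (2*m+1))
        - ∑ k ∈ range (K-m), X^(k*k+2*k+2*m*k) *
            ((pochN ((X:F⟦X⟧)^2) (X^2) m)⁻¹ * (pochN ((X:F⟦X⟧)^2) (X^2) k)⁻¹)) := by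
  set v := m + u with hv
  have hKv : K = (m+1) + v := by omega
  have hKm : K - m = v + 1 := by omega
  -- tail2
  set tail2 : F⟦X⟧ := ∏ j ∈ range (2*m+1), (1 - (-(X:F⟦X⟧))^(u+j+1)) with htail2
  have cc_tail2 : constantCoeff tail2 = 1 := by
    apply cc_prod_one_sub
    intro j _
    rw [map_pow, map_neg, constantCoeff_X, neg_zero, zero_pow (by omega : u+j+1 ≠ 0)]
  have dvd_tail2 : (X:F⟦X⟧)^(u+1) ∣ tail2 - 1 := by
    apply dvd_prod_sub_one
    intro j _
    have : (1 : F⟦X⟧) - (-(X:F⟦X⟧))^(u+j+1) - 1 = -((-(X:F⟦X⟧))^(u+j+1)) := by ring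
    rw [this, dvd_neg]
    exact dvd_negX_pow _ _ (by omega)
  -- step 1 : gb (-X) K (2m+1) * (pp (2m+1) * pp u) = pp K ; cancel pp u
  have e3 : gb (-(X:F⟦X⟧)) K (2*m+1) * pp (-(X:F⟦X⟧)) (2*m+1) = tail2 := by
    have e1 := gbrel (-(X:F⟦X⟧)) K (2*m+1) (by omega)
    rw [show K - (2*m+1) = u from by omega] at e1
    have e2 : pp (-(X:F⟦X⟧)) K = pp (-(X:F⟦X⟧)) u * tail2 := by
      rw [show K = u + (2*m+1) from by omega, pp_add]
    rw [e2] at e1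
    apply cancel_right (cc_ppX u)
    calc gb (-(X:F⟦X⟧)) K (2*m+1) * pp (-(X:F⟦X⟧)) (2*m+1) * pp (-(X:F⟦X⟧)) u
        = gb (-(X:F⟦X⟧)) K (2*m+1) * (pp (-(X:F⟦X⟧)) (2*m+1) * pp (-(X:F⟦X⟧)) u) := by ring
      _ = pp (-(X:F⟦X⟧)) u * tail2 := e1
      _ = tail2 * pp (-(X:F⟦X⟧)) u := by ring
  rw [pp_odd m] at e3
  -- E
  set E : F⟦X⟧ := pochN (-((X:F⟦X⟧)^(2*(m+1)+1))) ((X:F⟦X⟧)^2) v with hE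
  have e5 : pochN (-(X:F⟦X⟧)) (X^2) K = pochN (-(X:F⟦X⟧)) (X^2) (m+1) * E := by
    rw [hKv, Podd_add]
  -- W * Qs m = E * tail2
  have e6 : pochN (-(X:F⟦X⟧)) (X^2) K * gb (-(X:F⟦X⟧)) K (2*m+1) * pochN ((X:F⟦X⟧)^2) (X^2) m
      = E * tail2 := by
    rw [e5]
    calc pochN (-(X:F⟦X⟧)) (X^2) (m+1) * E * gb (-(X:F⟦X⟧)) K (2*m+1) * pochN ((X:F⟦X⟧)^2) (X^2) m
        = E * (gb (-(X:F⟦X⟧)) K (2*m+1) * (pochN (-(X:F⟦X⟧)) (X^2) (m+1) * pochN ((X:F⟦X⟧)^2) (X^2) m)) := by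
          ring
      _ = E * tail2 := by rw [e3]
  have e7 : pochN (-(X:F⟦X⟧)) (X^2) K * gb (-(X:F⟦X⟧)) K (2*m+1)
      = E * tail2 * (pochN ((X:F⟦X⟧)^2) (X^2) m)⁻¹ := eq_mul_inv (cc_Qs m) e6
  -- expand E via gauss
  have e8 : E = ∑ k ∈ range (v+1),
      ((X:F⟦X⟧)^2)^(k.choose 2) * gb ((X:F⟦X⟧)^2) v k * ((X:F⟦X⟧)^(2*(m+1)+1))^k := by
    rw [hE, pochN_gauss]
    refine Finset.sum_congr rfl fun k _ => ?_
    rw [neg_neg]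
  rw [e7, e8, hKm]
  -- per-k rewriting of E's terms
  have e11 : (∑ k ∈ range (v+1),
        ((X:F⟦X⟧)^2)^(k.choose 2) * gb ((X:F⟦X⟧)^2) v k * ((X:F⟦X⟧)^(2*(m+1)+1))^k)
        * tail2 * (pochN ((X:F⟦X⟧)^2) (X^2) m)⁻¹
      - ∑ k ∈ range (v+1), X^(k*k+2*k+2*m*k) *
          ((pochN ((X:F⟦X⟧)^2) (X^2) m)⁻¹ * (pochN ((X:F⟦X⟧)^2) (X^2) k)⁻¹)
      = ∑ k ∈ range (v+1), (X^(k*k+2*k+2*m*k) * (pochN ((X:F⟦X⟧)^2) (X^2) k)⁻¹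
          * (pochN ((X:F⟦X⟧)^2) (X^2) m)⁻¹
          * ((∏ j ∈ range k, (1 - (X:F⟦X⟧)^2 * ((X:F⟦X⟧)^2)^((v-k)+j))) * tail2 - 1)) := by
    rw [Finset.sum_mul, Finset.sum_mul, ← Finset.sum_sub_distrib]
    refine Finset.sum_congr rfl fun k hk => ?_
    have hkv : k ≤ v := by
      have := Finset.mem_range.1 hk; omega
    rw [gb_X2_eq v k hkv]
    have hexp : ((X:F⟦X⟧)^2)^(k.choose 2) * ((X:F⟦X⟧)^(2*(m+1)+1))^k = X^(k*k+2*k+2*m*k) := by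
      rw [← pow_mul, ← pow_mul, ← pow_add]
      congr 1
      have h1 := two_choose_two k
      nlinarith [h1]
    calc ((X:F⟦X⟧)^2)^(k.choose 2) *
          ((∏ j ∈ range k, (1 - (X:F⟦X⟧)^2 * ((X:F⟦X⟧)^2)^((v-k)+j)))
            * (pochN ((X:F⟦X⟧)^2) (X^2) k)⁻¹) * ((X:F⟦X⟧)^(2*(m+1)+1))^k
          * tail2 * (pochN ((X:F⟦X⟧)^2) (X^2) m)⁻¹
        - X^(k*k+2*k+2*m*k) *
            ((pochN ((X:F⟦X⟧)^2) (X^2) m)⁻¹ * (pochN ((X:F⟦X⟧)^2) (X^2) k)⁻¹)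
        = (((X:F⟦X⟧)^2)^(k.choose 2) * ((X:F⟦X⟧)^(2*(m+1)+1))^k) *
            (pochN ((X:F⟦X⟧)^2) (X^2) k)⁻¹ * (pochN ((X:F⟦X⟧)^2) (X^2) m)⁻¹
            * ((∏ j ∈ range k, (1 - (X:F⟦X⟧)^2 * ((X:F⟦X⟧)^2)^((v-k)+j))) * tail2)
          - X^(k*k+2*k+2*m*k) * (pochN ((X:F⟦X⟧)^2) (X^2) k)⁻¹
            * (pochN ((X:F⟦X⟧)^2) (X^2) m)⁻¹ * 1 := by ring
      _ = _ := by rw [hexp]; ring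
  rw [e11, Finset.mul_sum]
  apply Finset.dvd_sum
  intro k hk
  have hkv : k ≤ v := by have := Finset.mem_range.1 hk; omega
  -- divisibility of the bracket
  obtain ⟨r2, hr2⟩ := dvd_tail2
  have dvd_tail3 : (X:F⟦X⟧)^(2*(v-k)+2) ∣
      (∏ j ∈ range k, (1 - (X:F⟦X⟧)^2 * ((X:F⟦X⟧)^2)^((v-k)+j))) - 1 := by
    apply dvd_prod_sub_one
    intro j _
    have h0 : (1:F⟦X⟧) - (X:F⟦X⟧)^2 * ((X:F⟦X⟧)^2)^((v-k)+j) - 1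
        = -((X:F⟦X⟧)^(2*((v-k)+j)+2)) := by
      rw [← pow_mul, ← pow_add]
      ring_nf
    rw [h0, dvd_neg]
    exact pow_dvd_pow X (by omega)
  obtain ⟨r3, hr3⟩ := dvd_tail3
  have key : (∏ j ∈ range k, (1 - (X:F⟦X⟧)^2 * ((X:F⟦X⟧)^2)^((v-k)+j))) * tail2 - 1
      = (∏ j ∈ range k, (1 - (X:F⟦X⟧)^2 * ((X:F⟦X⟧)^2)^((v-k)+j))) * (X^(u+1) * r2)
        + X^(2*(v-k)+2) * r3 := by
    rw [← hr2, ← hr3]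
    ring
  -- final: X^K divides the whole k-term
  have hsum : X ^ (2 * (m * m) + m) *
      (X ^ (k * k + 2 * k + 2 * m * k) * (pochN ((X:F⟦X⟧) ^ 2) (X ^ 2) k)⁻¹ *
        (pochN ((X:F⟦X⟧) ^ 2) (X ^ 2) m)⁻¹ *
          ((∏ j ∈ range k, (1 - (X:F⟦X⟧)^2 * ((X:F⟦X⟧)^2)^((v-k)+j))) * tail2 - 1))
      = X^(2*(m*m)+m + (k*k+2*k+2*m*k) + (u+1)) *
          ((pochN ((X:F⟦X⟧) ^ 2) (X ^ 2) k)⁻¹ * (pochN ((X:F⟦X⟧) ^ 2) (X ^ 2) m)⁻¹ *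
            ((∏ j ∈ range k, (1 - (X:F⟦X⟧)^2 * ((X:F⟦X⟧)^2)^((v-k)+j))) * r2))
        + X^(2*(m*m)+m + (k*k+2*k+2*m*k) + (2*(v-k)+2)) *
          ((pochN ((X:F⟦X⟧) ^ 2) (X ^ 2) k)⁻¹ * (pochN ((X:F⟦X⟧) ^ 2) (X ^ 2) m)⁻¹ * r3) := by
    rw [key, pow_add, pow_add, pow_add, pow_add]
    ring
  rw [hsum]
  have hm2 : m ≤ m * m := m_le_mul_self m
  have hwk : v - k + k = v := by omega
  apply dvd_add
  · exact ((pow_dvd_pow X (by omega : K ≤ 2*(m*m)+m + (k*k+2*k+2*m*k) + (u+1)))).mul_right _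
  · refine ((pow_dvd_pow X ?_)).mul_right _
    -- K ≤ 2mm+m+ek+2(v-k)+2
    have : 2*(v-k) + 2*k = 2*v := by omega
    omega


lemma f_expand (c : F⟦X⟧) (n : ℕ) :
    (X:F⟦X⟧)^(n^2+2*n) * pochN (c^2) (X^2) n * (pochN ((X:F⟦X⟧)^2) (X^2) n)⁻¹
    = ∑ mm ∈ range (n+1), ((-1:F⟦X⟧)^mm * ((c^2)^mm *
        ((X:F⟦X⟧)^(2*(mm*mm)+mm) * ((X:F⟦X⟧)^((n-mm)*(n-mm)+2*(n-mm)+2*mm*(n-mm)) *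
          ((pochN ((X:F⟦X⟧)^2) (X^2) mm)⁻¹ * (pochN ((X:F⟦X⟧)^2) (X^2) (n-mm))⁻¹))))) := by
  rw [pochN_gauss (c^2) ((X:F⟦X⟧)^2) n, Finset.mul_sum, Finset.sum_mul]
  refine Finset.sum_congr rfl fun mm hmm => ?_
  have hmn : mm ≤ n := by have := Finset.mem_range.1 hmm; omega
  have hginv : gb ((X:F⟦X⟧)^2) n mm * (pochN ((X:F⟦X⟧)^2) (X^2) n)⁻¹
      = (pochN ((X:F⟦X⟧)^2) (X^2) mm)⁻¹ * (pochN ((X:F⟦X⟧)^2) (X^2) (n-mm))⁻¹ := by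
    apply inv_helper (cc_Qs mm) (cc_Qs (n-mm)) (cc_Qs n)
    have h := gbrel ((X:F⟦X⟧)^2) n mm hmn
    rw [← pochN_eq_pp2, ← pochN_eq_pp2, ← pochN_eq_pp2] at h
    exact h
  have hxp : (X:F⟦X⟧)^(n^2+2*n) * ((X:F⟦X⟧)^2)^(Nat.choose mm 2)
      = (X:F⟦X⟧)^(2*(mm*mm)+mm) * (X:F⟦X⟧)^((n-mm)*(n-mm)+2*(n-mm)+2*mm*(n-mm)) := by
    rw [← pow_mul, ← pow_add, ← pow_add]
    congr 1
    have h1 := two_choose_two mm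
    have h2 : n^2 = n*n := by ring
    have h3 : n*n = mm*mm + 2*(mm*(n-mm)) + (n-mm)*(n-mm) := by
      have h4 : n = mm + (n - mm) := by omega
      have h5 : (mm + (n-mm)) * (mm + (n-mm))
          = mm*mm + 2*(mm*(n-mm)) + (n-mm)*(n-mm) := by ring
      rw [← h4] at h5
      exact h5
    have h6 : 2*mm*(n-mm) = 2*(mm*(n-mm)) := by ring
    omega
  have hneg : (-(c^2))^mm = (-1:F⟦X⟧)^mm * (c^2)^mm := by rw [neg_pow]
  calc (X:F⟦X⟧)^(n^2+2*n) * (((X:F⟦X⟧)^2)^(Nat.choose mm 2) * gb ((X:F⟦X⟧)^2) n mm * (-(c^2))^mm)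
        * (pochN ((X:F⟦X⟧)^2) (X^2) n)⁻¹
      = ((X:F⟦X⟧)^(n^2+2*n) * ((X:F⟦X⟧)^2)^(Nat.choose mm 2))
          * (gb ((X:F⟦X⟧)^2) n mm * (pochN ((X:F⟦X⟧)^2) (X^2) n)⁻¹) * (-(c^2))^mm := by ring
    _ = ((X:F⟦X⟧)^(2*(mm*mm)+mm) * (X:F⟦X⟧)^((n-mm)*(n-mm)+2*(n-mm)+2*mm*(n-mm)))
          * ((pochN ((X:F⟦X⟧)^2) (X^2) mm)⁻¹ * (pochN ((X:F⟦X⟧)^2) (X^2) (n-mm))⁻¹)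
          * ((-1:F⟦X⟧)^mm * (c^2)^mm) := by rw [hxp, hginv, hneg]
    _ = _ := by ring

lemma R_expand (c e : F⟦X⟧) (h1 : e * (2*c) = 1) (K : ℕ) :
    e * pochN (-(X:F⟦X⟧)) (X^2) K * (pochN (-c) (-X) K - pochN c (-X) K)
    = ∑ m ∈ range (K+1), ((-1:F⟦X⟧)^m * ((c^2)^m *
        ((X:F⟦X⟧)^(2*(m*m)+m) * (pochN (-(X:F⟦X⟧)) (X^2) K * gb (-(X:F⟦X⟧)) K (2*m+1))))) := by
  have a1 : pochN (-c) (-X) K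
      = ∑ n ∈ range (K+1), (-(X:F⟦X⟧))^(n.choose 2) * gb (-(X:F⟦X⟧)) K n * c^n := by
    rw [pochN_gauss]
    exact Finset.sum_congr rfl fun n _ => by rw [neg_neg]
  have a2 : pochN c (-X) K
      = ∑ n ∈ range (K+1), (-(X:F⟦X⟧))^(n.choose 2) * gb (-(X:F⟦X⟧)) K n * (-c)^n :=
    pochN_gauss c _ K
  rw [a1, a2, ← Finset.sum_sub_distrib]
  have a3 : ∀ n ∈ range (K+1),
      (-(X:F⟦X⟧))^(n.choose 2) * gb (-(X:F⟦X⟧)) K n * c^n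
      - (-(X:F⟦X⟧))^(n.choose 2) * gb (-(X:F⟦X⟧)) K n * (-c)^n
      = (-(X:F⟦X⟧))^(n.choose 2) * gb (-(X:F⟦X⟧)) K n * (c^n - (-c)^n) := fun n _ => by ring
  rw [Finset.sum_congr rfl a3]
  have a4 : ∑ n ∈ range (K+1), (-(X:F⟦X⟧))^(n.choose 2) * gb (-(X:F⟦X⟧)) K n * (c^n - (-c)^n)
      = ∑ n ∈ range (2*(K+1)), (-(X:F⟦X⟧))^(n.choose 2) * gb (-(X:F⟦X⟧)) K n * (c^n - (-c)^n) := by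
    apply Finset.sum_subset (Finset.range_subset_range.2 (by omega))
    intro x hx hnx
    rw [gb_eq_zero (-(X:F⟦X⟧)) K x (by simp at hnx; omega)]
    ring
  rw [a4, sum_range_pair]
  have a5 : ∀ m ∈ range (K+1),
      ((-(X:F⟦X⟧))^((2*m).choose 2) * gb (-(X:F⟦X⟧)) K (2*m) * (c^(2*m) - (-c)^(2*m))
        + (-(X:F⟦X⟧))^((2*m+1).choose 2) * gb (-(X:F⟦X⟧)) K (2*m+1) * (c^(2*m+1) - (-c)^(2*m+1)))
      = (-(X:F⟦X⟧))^((2*m+1).choose 2) * gb (-(X:F⟦X⟧)) K (2*m+1) * (2 * c^(2*m+1)) := by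
    intro m _
    rw [Even.neg_pow ⟨m, by ring⟩ c, Odd.neg_pow ⟨m, by ring⟩ c]
    ring
  rw [Finset.sum_congr rfl a5, Finset.mul_sum]
  refine Finset.sum_congr rfl fun m _ => ?_
  have hpow : (-(X:F⟦X⟧))^((2*m+1).choose 2) = (-1:F⟦X⟧)^m * (X:F⟦X⟧)^(2*(m*m)+m) := by
    rw [choose_odd m, negX_pow, pow_add, pow_mul, neg_one_sq, one_pow, one_mul]
  have hc : (2:F⟦X⟧) * c^(2*m+1) * e = (c^2)^m := by
    have hcc : c^(2*m+1) = (c^2)^m * c := by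
      rw [pow_succ, pow_mul]
    rw [hcc]
    calc (2:F⟦X⟧) * ((c^2)^m * c) * e = (c^2)^m * (e * (2*c)) := by ring
      _ = (c^2)^m := by rw [h1, mul_one]
  calc e * pochN (-(X:F⟦X⟧)) (X^2) K *
        ((-(X:F⟦X⟧))^((2*m+1).choose 2) * gb (-(X:F⟦X⟧)) K (2*m+1) * (2 * c^(2*m+1)))
      = (-(X:F⟦X⟧))^((2*m+1).choose 2) * ((2:F⟦X⟧) * c^(2*m+1) * e)
          * (pochN (-(X:F⟦X⟧)) (X^2) K * gb (-(X:F⟦X⟧)) K (2*m+1)) := by ring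
    _ = ((-1:F⟦X⟧)^m * (X:F⟦X⟧)^(2*(m*m)+m)) * (c^2)^m
          * (pochN (-(X:F⟦X⟧)) (X^2) K * gb (-(X:F⟦X⟧)) K (2*m+1)) := by rw [hpow, hc]
    _ = _ := by ring

lemma per_m_full (c : F⟦X⟧) (K m : ℕ) (hm : m < K) :
    (X:F⟦X⟧)^K ∣
      ((-1:F⟦X⟧)^m * ((c^2)^m * ((X:F⟦X⟧)^(2*(m*m)+m) *
        (∑ k ∈ range (K-m), (X:F⟦X⟧)^(k*k+2*k+2*m*k) *
          ((pochN ((X:F⟦X⟧)^2) (X^2) m)⁻¹ * (pochN ((X:F⟦X⟧)^2) (X^2) k)⁻¹)))))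
      - ((-1:F⟦X⟧)^m * ((c^2)^m * ((X:F⟦X⟧)^(2*(m*m)+m) *
          (pochN (-(X:F⟦X⟧)) (X^2) K * gb (-(X:F⟦X⟧)) K (2*m+1))))) := by
  have base : (X:F⟦X⟧)^K ∣ (X:F⟦X⟧)^(2*(m*m)+m) *
      ((pochN (-(X:F⟦X⟧)) (X^2) K * gb (-(X:F⟦X⟧)) K (2*m+1))
        - ∑ k ∈ range (K-m), (X:F⟦X⟧)^(k*k+2*k+2*m*k) *
            ((pochN ((X:F⟦X⟧)^2) (X^2) m)⁻¹ * (pochN ((X:F⟦X⟧)^2) (X^2) k)⁻¹)) := by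
    rcases Nat.lt_or_ge K (2*m+1) with hbig | hle
    · have hmm := m_le_mul_self m
      exact (pow_dvd_pow (X:F⟦X⟧) (by omega : K ≤ 2*(m*m)+m)).mul_right _
    · obtain ⟨u, hu⟩ : ∃ u, K = 2*m+1+u := ⟨K - (2*m+1), by omega⟩
      exact per_m K m u hu
  have hrw : ((-1:F⟦X⟧)^m * ((c^2)^m * ((X:F⟦X⟧)^(2*(m*m)+m) *
        (∑ k ∈ range (K-m), (X:F⟦X⟧)^(k*k+2*k+2*m*k) *
          ((pochN ((X:F⟦X⟧)^2) (X^2) m)⁻¹ * (pochN ((X:F⟦X⟧)^2) (X^2) k)⁻¹)))))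
      - ((-1:F⟦X⟧)^m * ((c^2)^m * ((X:F⟦X⟧)^(2*(m*m)+m) *
          (pochN (-(X:F⟦X⟧)) (X^2) K * gb (-(X:F⟦X⟧)) K (2*m+1)))))
      = ((-1:F⟦X⟧)^m * (c^2)^m) *
          -((X:F⟦X⟧)^(2*(m*m)+m) *
            ((pochN (-(X:F⟦X⟧)) (X^2) K * gb (-(X:F⟦X⟧)) K (2*m+1))
              - ∑ k ∈ range (K-m), (X:F⟦X⟧)^(k*k+2*k+2*m*k) *
                  ((pochN ((X:F⟦X⟧)^2) (X^2) m)⁻¹ * (pochN ((X:F⟦X⟧)^2) (X^2) k)⁻¹))) := by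
    ring
  rw [hrw]
  exact ((dvd_neg.2 base).mul_left _)

theorem main_claim (c e : F⟦X⟧) (h1 : e * (2*c) = 1) (K : ℕ) :
    (X:F⟦X⟧)^K ∣
      (∑ n ∈ range K, (X:F⟦X⟧)^(n^2+2*n) * pochN (c^2) (X^2) n * (pochN ((X:F⟦X⟧)^2) (X^2) n)⁻¹)
      - e * pochN (-(X:F⟦X⟧)) (X^2) K * (pochN (-c) (-X) K - pochN c (-X) K) := by
  rw [R_expand c e h1 K]
  have hL : (∑ n ∈ range K, (X:F⟦X⟧)^(n^2+2*n) * pochN (c^2) (X^2) n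
        * (pochN ((X:F⟦X⟧)^2) (X^2) n)⁻¹)
      = ∑ m ∈ range K, ((-1:F⟦X⟧)^m * ((c^2)^m * ((X:F⟦X⟧)^(2*(m*m)+m) *
          (∑ k ∈ range (K-m), (X:F⟦X⟧)^(k*k+2*k+2*m*k) *
            ((pochN ((X:F⟦X⟧)^2) (X^2) m)⁻¹ * (pochN ((X:F⟦X⟧)^2) (X^2) k)⁻¹))))) := by
    rw [Finset.sum_congr rfl (fun n _ => f_expand c n)]
    rw [sum_tri (fun m k => ((-1:F⟦X⟧)^m * ((c^2)^m *
        ((X:F⟦X⟧)^(2*(m*m)+m) * ((X:F⟦X⟧)^(k*k+2*k+2*m*k) *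
          ((pochN ((X:F⟦X⟧)^2) (X^2) m)⁻¹ * (pochN ((X:F⟦X⟧)^2) (X^2) k)⁻¹)))))) K]
    refine Finset.sum_congr rfl fun m _ => ?_
    rw [← Finset.mul_sum, ← Finset.mul_sum, ← Finset.mul_sum]
  rw [hL, Finset.sum_range_succ]
  have hsplit : (∑ m ∈ range K, ((-1:F⟦X⟧)^m * ((c^2)^m * ((X:F⟦X⟧)^(2*(m*m)+m) *
          (∑ k ∈ range (K-m), (X:F⟦X⟧)^(k*k+2*k+2*m*k) *
            ((pochN ((X:F⟦X⟧)^2) (X^2) m)⁻¹ * (pochN ((X:F⟦X⟧)^2) (X^2) k)⁻¹))))))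
      - ((∑ m ∈ range K, ((-1:F⟦X⟧)^m * ((c^2)^m * ((X:F⟦X⟧)^(2*(m*m)+m) *
          (pochN (-(X:F⟦X⟧)) (X^2) K * gb (-(X:F⟦X⟧)) K (2*m+1)))))) + ((-1:F⟦X⟧)^K * ((c^2)^K * ((X:F⟦X⟧)^(2*(K*K)+K) *
          (pochN (-(X:F⟦X⟧)) (X^2) K * gb (-(X:F⟦X⟧)) K (2*K+1))))))
      = (∑ m ∈ range K, (((-1:F⟦X⟧)^m * ((c^2)^m * ((X:F⟦X⟧)^(2*(m*m)+m) *
          (∑ k ∈ range (K-m), (X:F⟦X⟧)^(k*k+2*k+2*m*k) *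
            ((pochN ((X:F⟦X⟧)^2) (X^2) m)⁻¹ * (pochN ((X:F⟦X⟧)^2) (X^2) k)⁻¹))))) - ((-1:F⟦X⟧)^m * ((c^2)^m * ((X:F⟦X⟧)^(2*(m*m)+m) *
          (pochN (-(X:F⟦X⟧)) (X^2) K * gb (-(X:F⟦X⟧)) K (2*m+1))))))) - ((-1:F⟦X⟧)^K * ((c^2)^K * ((X:F⟦X⟧)^(2*(K*K)+K) *
          (pochN (-(X:F⟦X⟧)) (X^2) K * gb (-(X:F⟦X⟧)) K (2*K+1))))) := by
    rw [Finset.sum_sub_distrib]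
    ring
  rw [hsplit]
  refine dvd_sub (Finset.dvd_sum fun m hm => per_m_full c K m (Finset.mem_range.1 hm)) ?_
  have hTK : ((-1:F⟦X⟧)^K * ((c^2)^K * ((X:F⟦X⟧)^(2*(K*K)+K) *
          (pochN (-(X:F⟦X⟧)) (X^2) K * gb (-(X:F⟦X⟧)) K (2*K+1)))))
      = (X:F⟦X⟧)^(2*(K*K)+K) * ((-1:F⟦X⟧)^K * ((c^2)^K *
          (pochN (-(X:F⟦X⟧)) (X^2) K * gb (-(X:F⟦X⟧)) K (2*K+1)))) := by
    ring
  rw [hTK]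
  exact (pow_dvd_pow (X:F⟦X⟧) (Nat.le_add_left K (2*(K*K)))).mul_right _


lemma poch_trunc_dvd (a b : F⟦X⟧) (hb : (X:F⟦X⟧) ∣ b) (d : ℕ) :
    (X:F⟦X⟧)^(d+1) ∣ (poch a b) - pochN a b (d+1) := by
  apply tprod_trunc_dvd
  intro dd j hj
  have h0 : (1 : F⟦X⟧) - a * b^j - 1 = -(a * b^j) := by ring
  rw [h0, dvd_neg]
  exact ((pow_dvd_pow (X:F⟦X⟧) (by omega : dd+1 ≤ j)).trans
    (pow_dvd_pow_of_dvd hb j)).mul_left a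

end Saux


open Saux GBaux

/-- With `A = B²` (`B = RatFunc.X` a formal variable, so `√A = B`):
`G(A;q) := Σ_{n≥0} q^{n²+2n}(A;q²)_n/(q²;q²)_n
  = 1/(2√A) · (-q;q²)_∞ [(-√A;-q)_∞ - (√A;-q)_∞]`. -/
theorem G_identity :
    (∑' n : ℕ, (X : (RatFunc ℚ)⟦X⟧) ^ (n ^ 2 + 2 * n) *
        pochN (C ((RatFunc.X : RatFunc ℚ) ^ 2)) (X ^ 2) n *
        (pochN ((X : (RatFunc ℚ)⟦X⟧) ^ 2) (X ^ 2) n)⁻¹) =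
      C ((2 * (RatFunc.X : RatFunc ℚ))⁻¹) * poch (-(X : (RatFunc ℚ)⟦X⟧)) (X ^ 2) *
        (poch (-(C (RatFunc.X : RatFunc ℚ))) (-X) - poch (C (RatFunc.X : RatFunc ℚ)) (-X)) := by
  have hA : C ((RatFunc.X : RatFunc ℚ) ^ 2) = (C RatFunc.X)^2 :=
    map_pow _ _ 2
  have h2ne : (2 : RatFunc ℚ) ≠ 0 := by
    have h : algebraMap (Polynomial ℚ) (RatFunc ℚ) 2 ≠ 0 := by
      rw [ne_eq, map_eq_zero_iff _ (RatFunc.algebraMap_injective ℚ)]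
      norm_num
    rw [map_ofNat] at h
    exact h
  have hBne : (2 * (RatFunc.X : RatFunc ℚ)) ≠ 0 :=
    mul_ne_zero h2ne RatFunc.X_ne_zero
  have h1 : (C ((2 * (RatFunc.X : RatFunc ℚ))⁻¹)) * (2 * C RatFunc.X)
      = 1 := by
    rw [show (2 : (RatFunc ℚ)⟦X⟧) * C RatFunc.X
        = C (2 * RatFunc.X) from by rw [map_mul, map_ofNat],
      ← map_mul, inv_mul_cancel₀ hBne, map_one]
  simp only [hA]
  apply PowerSeries.ext
  intro d
  -- LHS truncation
  have hcoeff : ∀ dd n, dd < n → PowerSeries.coeff dd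
      ((X : (RatFunc ℚ)⟦X⟧) ^ (n ^ 2 + 2 * n) *
        pochN ((C RatFunc.X)^2) (X ^ 2) n *
        (pochN ((X : (RatFunc ℚ)⟦X⟧) ^ 2) (X ^ 2) n)⁻¹) = 0 := by
    intro dd n hn
    have hdvd : (X : (RatFunc ℚ)⟦X⟧)^(dd+1) ∣ _ :=
      ((pow_dvd_pow (X : (RatFunc ℚ)⟦X⟧) (by omega : dd+1 ≤ n^2+2*n)).mul_right
        (pochN ((C RatFunc.X)^2) (X ^ 2) n)).mul_right
        ((pochN ((X : (RatFunc ℚ)⟦X⟧) ^ 2) (X ^ 2) n)⁻¹)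
    exact PowerSeries.X_pow_dvd_iff.1 hdvd dd (by omega)
  -- RHS truncation dvds
  have d1 := poch_trunc_dvd (-(X : (RatFunc ℚ)⟦X⟧)) (X^2) ⟨X, sq X⟩ d
  have d2 := poch_trunc_dvd (-(C (RatFunc.X : RatFunc ℚ))) (-X) ⟨-1, by ring⟩ d
  have d3 := poch_trunc_dvd (C (RatFunc.X : RatFunc ℚ)) (-X) ⟨-1, by ring⟩ d
  have hRdvd : (X : (RatFunc ℚ)⟦X⟧)^(d+1) ∣
      C ((2 * (RatFunc.X : RatFunc ℚ))⁻¹) * poch (-(X : (RatFunc ℚ)⟦X⟧)) (X ^ 2) *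
        (poch (-(C RatFunc.X)) (-X) - poch (C RatFunc.X) (-X))
      - C ((2 * (RatFunc.X : RatFunc ℚ))⁻¹) * pochN (-(X : (RatFunc ℚ)⟦X⟧)) (X ^ 2) (d+1) *
        (pochN (-(C RatFunc.X)) (-X) (d+1) - pochN (C RatFunc.X) (-X) (d+1)) := by
    have hring : C ((2 * (RatFunc.X : RatFunc ℚ))⁻¹) * poch (-(X : (RatFunc ℚ)⟦X⟧)) (X ^ 2) *
        (poch (-(C RatFunc.X)) (-X) - poch (C RatFunc.X) (-X))
      - C ((2 * (RatFunc.X : RatFunc ℚ))⁻¹) * pochN (-(X : (RatFunc ℚ)⟦X⟧)) (X ^ 2) (d+1) *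
        (pochN (-(C RatFunc.X)) (-X) (d+1) - pochN (C RatFunc.X) (-X) (d+1))
      = C ((2 * (RatFunc.X : RatFunc ℚ))⁻¹) *
          ((poch (-(X : (RatFunc ℚ)⟦X⟧)) (X ^ 2) - pochN (-(X : (RatFunc ℚ)⟦X⟧)) (X ^ 2) (d+1)) *
            (poch (-(C RatFunc.X)) (-X) - poch (C RatFunc.X) (-X)))
        + (C ((2 * (RatFunc.X : RatFunc ℚ))⁻¹) * pochN (-(X : (RatFunc ℚ)⟦X⟧)) (X ^ 2) (d+1)) *
            ((poch (-(C RatFunc.X)) (-X) - pochN (-(C RatFunc.X)) (-X) (d+1))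
              - (poch (C RatFunc.X) (-X) - pochN (C RatFunc.X) (-X) (d+1))) := by
      ring
    rw [hring]
    exact dvd_add ((d1.mul_right _).mul_left _) ((dvd_sub d2 d3).mul_left _)
  calc PowerSeries.coeff d (∑' n : ℕ, (X : (RatFunc ℚ)⟦X⟧) ^ (n ^ 2 + 2 * n) *
        pochN ((C RatFunc.X)^2) (X ^ 2) n *
        (pochN ((X : (RatFunc ℚ)⟦X⟧) ^ 2) (X ^ 2) n)⁻¹)
      = PowerSeries.coeff d (∑ n ∈ range (d+1),
          (X : (RatFunc ℚ)⟦X⟧) ^ (n ^ 2 + 2 * n) *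
          pochN ((C RatFunc.X)^2) (X ^ 2) n *
          (pochN ((X : (RatFunc ℚ)⟦X⟧) ^ 2) (X ^ 2) n)⁻¹) := coeff_tsum_trunc _ hcoeff d
    _ = PowerSeries.coeff d
          (C ((2 * (RatFunc.X : RatFunc ℚ))⁻¹) * pochN (-(X : (RatFunc ℚ)⟦X⟧)) (X ^ 2) (d+1) *
            (pochN (-(C RatFunc.X)) (-X) (d+1) - pochN (C RatFunc.X) (-X) (d+1))) := by
        apply coeff_eq_of_dvd ?_ le_rfl
        have := main_claim (C RatFunc.X) (C ((2 * (RatFunc.X : RatFunc ℚ))⁻¹)) h1 (d+1)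
        exact this
    _ = _ := (coeff_eq_of_dvd hRdvd le_rfl).symm
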